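/- arXiv:1412.6080 — 3 statements merged into one kernel-verified Lean document; each statement's English description precedes it below -/
import Mathlib

section
/- For every s-dimensional K-subspace V of L, there exists a unique monic θ-polynomial P_V of θ-degree exactly s such that P_V(x) = 0 for all x ∈ V. -/
open Polynomial

/-- Evaluation of a θ-polynomial at `g`. -/
noncomputable def skewEval {K L : Type*} [Field K] [Field L] [Algebra K L]
    (θ : L ≃ₐ[K] L) (P : Polynomial L) (g : L) : L :=
  P.sum fun i a => a * (θ ^ i) g

/-!
The θ-polynomials of θ-degree `< s` form an `s`-dimensional `L`-space, and so does
`Hom_K(V, L)`; evaluation on `V` is an `L`-linear map between them. It is injective because a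
nonzero θ-polynomial `P` has a kernel of `K`-dimension at most `deg P`: if `P(v) = 0` with
`v ≠ 0`, then `P(y v) = Q(θ y - y)` for a nonzero `Q` of smaller degree, so `x ↦ θ(x/v) - x/v`
maps `ker P` into `ker Q`, and its own kernel is `K v` because the fixed field of `θ` is `K`.
Hence evaluation is bijective, and `P_V = Z^{θ^s} + Q` for the unique `Q` of degree `< s`
agreeing with `-θ^s` on `V`.

That `L/K` is finite is forced: a Galois group generated by one element is countable, and by
the Baire category theorem a countable compact Hausdorff group is discrete, hence finite.
-/

open Module

lemma finite_of_compactSpace_of_countable {G : Type*} [Group G] [TopologicalSpace G]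
    [IsTopologicalGroup G] [CompactSpace G] [T2Space G] [Countable G] : Finite G := by
  obtain ⟨g, x, hg⟩ := nonempty_interior_of_iUnion_of_closed (f := fun g : G => {g})
    (fun _ => isClosed_singleton) (Set.iUnion_of_singleton G)
  obtain rfl : g = x := (Set.mem_singleton_iff.mp (interior_subset hg)).symm
  have hg_open : IsOpen ({g} : Set G) := by
    rw [isOpen_iff_mem_nhds]
    rintro _ rfl
    exact mem_interior_iff_mem_nhds.mp hg
  have : DiscreteTopology G := discreteTopology_of_isOpen_singleton_one <| by
    simpa using hg_open.smul g⁻¹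
  exact finite_of_compact_of_discrete

lemma finrank_le_finrank_add_finrank_ker_of_map_le {K V V₂ : Type*} [DivisionRing K]
    [AddCommGroup V] [Module K V] [AddCommGroup V₂] [Module K V₂] [FiniteDimensional K V]
    [FiniteDimensional K V₂] (f : V →ₗ[K] V₂) {W : Submodule K V} {U : Submodule K V₂}
    (h : W.map f ≤ U) : finrank K W ≤ finrank K U + finrank K (LinearMap.ker f) := by
  rw [← (f.domRestrict W).finrank_range_add_finrank_ker, LinearMap.range_domRestrict,
    LinearMap.ker_domRestrict, ← Submodule.finrank_map_subtype_eq]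
  gcongr
  · exact Submodule.finrank_mono h
  · exact Submodule.finrank_mono (Submodule.map_comap_le _ _)

lemma existsUnique_monic_natDegree_eq_of_bijective {R M : Type*} [CommRing R] [Nontrivial R]
    [AddCommGroup M] [Module R M] (Φ : R[X] →ₗ[R] M) (s : ℕ)
    (hΦ : Function.Bijective (Φ ∘ₗ (degreeLT R s).subtype)) :
    ∃! P : R[X], P.Monic ∧ P.natDegree = s ∧ Φ P = 0 := by
  obtain ⟨⟨Q, hQs⟩, hQ⟩ := hΦ.2 (-Φ (X ^ s))
  rw [mem_degreeLT] at hQs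
  simp only [LinearMap.comp_apply, Submodule.subtype_apply] at hQ
  refine ⟨X ^ s + Q, ⟨monic_X_pow_add hQs, ?_, ?_⟩, ?_⟩
  · rw [natDegree_add_eq_left_of_degree_lt (by rwa [degree_X_pow]), natDegree_X_pow]
  · rw [map_add, hQ, add_neg_cancel]
  rintro P ⟨hmon, hdeg, hP⟩
  have hPs : degree P = s := by rw [degree_eq_natDegree hmon.ne_zero, hdeg]
  have hmem : P - X ^ s ∈ degreeLT R s := by
    refine mem_degreeLT.mpr
      (hPs ▸ degree_sub_lt_left (by rw [hPs, degree_X_pow]) hmon.ne_zero ?_)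
    rw [hmon.leadingCoeff, leadingCoeff_X_pow]
  have := @hΦ.1 ⟨P - X ^ s, hmem⟩ ⟨Q, mem_degreeLT.mpr hQs⟩ (by simp [hQ, hP])
  rw [← sub_eq_iff_eq_add', Subtype.mk.inj this]

section SkewEval

variable {K L : Type*} [Field K] [Field L] [Algebra K L] (θ : L ≃ₐ[K] L)

noncomputable def skewEvalLinear : L[X] →ₗ[L] L →ₗ[K] L :=
  lsum fun i => LinearMap.toSpanSingleton L _ (θ ^ i).toLinearMap

@[simp]
lemma skewEvalLinear_apply (P : L[X]) (x : L) : skewEvalLinear θ P x = skewEval θ P x := by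
  simp only [skewEvalLinear, lsum_apply, skewEval, Polynomial.sum_def, LinearMap.sum_apply,
    LinearMap.toSpanSingleton_apply, LinearMap.smul_apply, smul_eq_mul]
  rfl

lemma skewEval_monomial (i : ℕ) (a x : L) : skewEval θ (monomial i a) x = a * (θ ^ i) x := by
  rw [← skewEvalLinear_apply, skewEvalLinear, lsum_apply, sum_monomial_index _ _ (by simp)]
  rfl

lemma skewEval_ne_zero_of_natDegree_eq_zero {P : L[X]} (hP : P ≠ 0) (hd : P.natDegree = 0)
    {v : L} (hv : v ≠ 0) : skewEval θ P v ≠ 0 := by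
  have hc : P.coeff 0 ≠ 0 := hd ▸ leadingCoeff_ne_zero.mpr hP
  rw [eq_C_of_natDegree_eq_zero hd, ← monomial_zero_left, skewEval_monomial, pow_zero,
    AlgEquiv.one_apply]
  exact mul_ne_zero hc hv

/-- Read off from `θ^i y - y = ∑_{j<i} θ^j (θ y - y)`; see `skewEval_mul_right`. -/
noncomputable def skewQuotient (P : L[X]) (v : L) : L[X] :=
  P.sum fun i a => ∑ j ∈ Finset.range i, monomial j (a * (θ ^ i) v)

lemma skewEval_skewQuotient (P : L[X]) (v z : L) :
    skewEval θ (skewQuotient θ P v) z =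
      P.sum fun i a => a * (θ ^ i) v * ∑ j ∈ Finset.range i, (θ ^ j) z := by
  simp only [← skewEvalLinear_apply, skewQuotient, Polynomial.sum_def, map_sum,
    LinearMap.sum_apply]
  simp only [skewEvalLinear_apply, skewEval_monomial, Finset.mul_sum]

lemma sum_range_pow_apply_sub (y : L) (i : ℕ) :
    ∑ j ∈ Finset.range i, (θ ^ j) (θ y - y) = (θ ^ i) y - y := by
  simp only [map_sub, ← AlgEquiv.mul_apply, ← pow_succ]
  exact Finset.sum_range_sub (fun j => (θ ^ j) y) i

lemma skewEval_mul_right (P : L[X]) (v y : L) :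
    skewEval θ P (y * v) = skewEval θ P v * y + skewEval θ (skewQuotient θ P v) (θ y - y) := by
  rw [skewEval_skewQuotient]
  simp only [sum_range_pow_apply_sub, skewEval, Polynomial.sum_def, Finset.sum_mul,
    ← Finset.sum_add_distrib, map_mul]
  exact Finset.sum_congr rfl fun i _ => by ring

lemma coeff_skewQuotient (P : L[X]) (v : L) (k : ℕ) :
    (skewQuotient θ P v).coeff k =
      ∑ i ∈ P.support, if k < i then P.coeff i * (θ ^ i) v else 0 := by
  simp [skewQuotient, Polynomial.sum_def, finsetSum_coeff, coeff_monomial]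

lemma natDegree_skewQuotient_lt {P : L[X]} (hP : 0 < P.natDegree) (v : L) :
    (skewQuotient θ P v).natDegree < P.natDegree := by
  suffices (skewQuotient θ P v).natDegree ≤ P.natDegree - 1 by omega
  refine natDegree_le_iff_coeff_eq_zero.mpr fun k hk => ?_
  rw [coeff_skewQuotient]
  refine Finset.sum_eq_zero fun i hi => if_neg ?_
  have := le_natDegree_of_mem_supp i hi
  omega

lemma coeff_skewQuotient_natDegree_sub_one {P : L[X]} (hP : 0 < P.natDegree) (v : L) :
    (skewQuotient θ P v).coeff (P.natDegree - 1) = P.leadingCoeff * (θ ^ P.natDegree) v := by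
  have hP0 : P ≠ 0 := ne_zero_of_natDegree_gt hP
  rw [coeff_skewQuotient, Finset.sum_eq_single P.natDegree, if_pos (by omega), leadingCoeff]
  · intro i hi hne
    have := le_natDegree_of_mem_supp i hi
    exact if_neg (by omega)
  · exact fun h => absurd (natDegree_mem_support_of_nonzero hP0) h

lemma skewQuotient_ne_zero {P : L[X]} (hP : 0 < P.natDegree) {v : L} (hv : v ≠ 0) :
    skewQuotient θ P v ≠ 0 := by
  refine fun h => mul_ne_zero (leadingCoeff_ne_zero.mpr (ne_zero_of_natDegree_gt hP))
    ((_root_.map_ne_zero (θ ^ P.natDegree)).mpr hv) ?_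
  rw [← coeff_skewQuotient_natDegree_sub_one θ hP, h, coeff_zero]

lemma map_ker_skewEvalLinear_le {P : L[X]} {v : L} (hv : v ≠ 0) (hPv : skewEval θ P v = 0) :
    (LinearMap.ker (skewEvalLinear θ P)).map ((θ.toLinearMap - 1) ∘ₗ LinearMap.mulRight K v⁻¹)
      ≤ LinearMap.ker (skewEvalLinear θ (skewQuotient θ P v)) := by
  rintro _ ⟨x, hx, rfl⟩
  simp only [SetLike.mem_coe, LinearMap.mem_ker, skewEvalLinear_apply] at hx ⊢
  have := skewEval_mul_right θ P v (x * v⁻¹)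
  rw [inv_mul_cancel_right₀ hv, hx, hPv, zero_mul, zero_add] at this
  simpa using this.symm

lemma ker_sub_one_comp_mulRight_le (hθ : ∀ x, θ x = x → x ∈ Set.range (algebraMap K L))
    {v : L} (hv : v ≠ 0) :
    LinearMap.ker ((θ.toLinearMap - 1) ∘ₗ LinearMap.mulRight K v⁻¹) ≤ K ∙ v := by
  intro x hx
  simp only [LinearMap.mem_ker, LinearMap.comp_apply, LinearMap.sub_apply, sub_eq_zero] at hx
  obtain ⟨c, hc⟩ := hθ _ hx
  refine Submodule.mem_span_singleton.mpr ⟨c, ?_⟩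
  simp_all [Algebra.smul_def]

lemma finrank_ker_skewEvalLinear_le [FiniteDimensional K L]
    (hθ : ∀ x, θ x = x → x ∈ Set.range (algebraMap K L)) {P : L[X]} (hP : P ≠ 0) :
    finrank K (LinearMap.ker (skewEvalLinear θ P)) ≤ P.natDegree := by
  induction hd : P.natDegree using Nat.strong_induction_on generalizing P with
  | _ d ih =>
    rcases eq_or_ne (LinearMap.ker (skewEvalLinear θ P)) ⊥ with hW | hW
    · rw [hW, finrank_bot]
      exact Nat.zero_le _
    obtain ⟨v, hvW, hv⟩ := (Submodule.ne_bot_iff _).mp hW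
    have hPv : skewEval θ P v = 0 := by simpa using hvW
    have hd0 : 0 < d := Nat.pos_of_ne_zero fun h =>
      skewEval_ne_zero_of_natDegree_eq_zero θ hP (hd.trans h) hv hPv
    have hQ := natDegree_skewQuotient_lt θ (hd ▸ hd0) v
    calc finrank K (LinearMap.ker (skewEvalLinear θ P))
        ≤ finrank K (LinearMap.ker (skewEvalLinear θ (skewQuotient θ P v)))
          + finrank K (LinearMap.ker ((θ.toLinearMap - 1) ∘ₗ LinearMap.mulRight K v⁻¹)) :=
          finrank_le_finrank_add_finrank_ker_of_map_le _ (map_ker_skewEvalLinear_le θ hv hPv)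
      _ ≤ (skewQuotient θ P v).natDegree + finrank K (K ∙ v) :=
          add_le_add (ih _ (hd ▸ hQ) (skewQuotient_ne_zero θ (hd ▸ hd0) hv) rfl)
            (Submodule.finrank_mono (ker_sub_one_comp_mulRight_le θ hθ hv))
      _ ≤ d := by rw [finrank_span_singleton hv]; omega

noncomputable def skewEvalOn (V : Submodule K L) : L[X] →ₗ[L] V →ₗ[K] L :=
  LinearMap.lcomp L L V.subtype ∘ₗ skewEvalLinear θ

lemma bijective_skewEvalOn_comp_degreeLT [FiniteDimensional K L]
    (hθ : ∀ x, θ x = x → x ∈ Set.range (algebraMap K L)) (V : Submodule K L) :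
    Function.Bijective (skewEvalOn θ V ∘ₗ (degreeLT L (finrank K V)).subtype) := by
  have hinj : Function.Injective (skewEvalOn θ V ∘ₗ (degreeLT L (finrank K V)).subtype) := by
    rw [← LinearMap.ker_eq_bot, Submodule.eq_bot_iff]
    rintro ⟨P, hPV⟩ hP
    by_contra hne
    have hP0 : P ≠ 0 := fun h => hne (Subtype.ext h)
    have hV : V ≤ LinearMap.ker (skewEvalLinear θ P) := fun x hx =>
      LinearMap.congr_fun hP ⟨x, hx⟩
    have := (Submodule.finrank_mono hV).trans (finrank_ker_skewEvalLinear_le θ hθ hP0)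
    have := (natDegree_lt_iff_degree_lt hP0).mpr (mem_degreeLT.mp hPV)
    omega
  refine ⟨hinj, (LinearMap.injective_iff_surjective_of_finrank_eq_finrank ?_).mp hinj⟩
  rw [(degreeLTEquiv L _).finrank_eq, finrank_fin_fun, finrank_linearMap_self]

lemma finiteDimensional_of_forall_mem_zpowers [IsGalois K L]
    (hθ : ∀ σ : L ≃ₐ[K] L, σ ∈ Subgroup.zpowers θ) : FiniteDimensional K L := by
  have : Countable (L ≃ₐ[K] L) :=
    Function.Surjective.countable (f := fun k : ℤ => θ ^ k) fun σ => hθ σ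
  have : T2Space (L ≃ₐ[K] L) := krullTopology_t2
  have : Finite (L ≃ₐ[K] L) := finite_of_compactSpace_of_countable
  exact IsGalois.finiteDimensional_of_finite K L

lemma mem_range_algebraMap_of_apply_eq [IsGalois K L]
    (hθ : ∀ σ : L ≃ₐ[K] L, σ ∈ Subgroup.zpowers θ) {x : L} (hx : θ x = x) :
    x ∈ Set.range (algebraMap K L) :=
  (InfiniteGalois.mem_range_algebraMap_iff_fixed x).mpr fun σ =>
    Subgroup.zpowers_le.mpr (show θ ∈ MulAction.stabilizer _ x from hx) (hθ σ)

end SkewEval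

theorem exists_unique_monic_annihilator_general
    {K L : Type*} [Field K] [Field L] [Algebra K L] [IsGalois K L]
    (θ : L ≃ₐ[K] L)
    (hgen : ∀ σ : L ≃ₐ[K] L, σ ∈ Subgroup.zpowers θ)
    (s : ℕ) (V : Submodule K L) (hV : Module.finrank K V = s) :
    ∃! P : Polynomial L, P.Monic ∧ P.natDegree = s ∧
      ∀ x ∈ V, skewEval θ P x = 0 := by
  have := finiteDimensional_of_forall_mem_zpowers θ hgen
  have hbij := bijective_skewEvalOn_comp_degreeLT θ
    (fun _ => mem_range_algebraMap_of_apply_eq θ hgen) V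
  subst hV
  simpa [skewEvalOn, LinearMap.ext_iff] using
    existsUnique_monic_natDegree_eq_of_bijective _ _ hbij

/-- For every `s`-dimensional `K`-subspace `V` of `L` there is a unique monic
θ-polynomial `P_V` of θ-degree exactly `s` vanishing on all of `V`. -/
theorem exists_unique_monic_annihilator
    {K L : Type*} [Field K] [Field L] [Algebra K L] [IsGalois K L]
    (n : ℕ) (hn : Module.finrank K L = n)
    (θ : L ≃ₐ[K] L) (hord : orderOf θ = n)
    (hgen : ∀ σ : L ≃ₐ[K] L, σ ∈ Subgroup.zpowers θ)
    (s : ℕ) (hs : s ≤ n) (V : Submodule K L) (hV : Module.finrank K V = s) :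
    ∃! P : Polynomial L, P.Monic ∧ P.natDegree = s ∧
      ∀ x ∈ V, skewEval θ P x = 0 :=
  exists_unique_monic_annihilator_general θ hgen s V hV
end

section
/- The generalized Gabidulin code Gab_{θ,k}(g) is Maximum Rank Distance: every nonzero codeword has rank weight at least n − k + 1, and hence its minimum rank distance equals n − k + 1. -/
open Polynomial

/-- The rank weight of `c ∈ Lⁿ`. -/
noncomputable def rkw (K : Type*) {L : Type*} [Field K] [Field L] [Algebra K L]
    {n : ℕ} (c : Fin n → L) : ℕ :=
  Module.finrank K (Submodule.span K (Set.range c))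

/-!
A nonzero θ-polynomial `P` of θ-degree `d` acts on `L` as a `K`-linear map with kernel of
dimension at most `d`. Indeed, if `P(v) = 0` with `v ≠ 0`, then `x ↦ P(v x)` kills `1`, so by Abel
summation it factors as `Q ∘ (θ - 1)` with `Q` of θ-degree `d - 1` and leading coefficient still
nonzero, while `ker (θ - 1) = K` because `θ` generates the Galois group. As `g` is a `K`-basis of
`L`, the rank weight of the codeword of `P` is the rank of this map, so it is at least
`n - (k - 1)`. Conversely, vanishing at `g₁, …, g_{k-1}` imposes `k - 1` `L`-linear conditions on
the `k` coefficients of `P`, so some nonzero `P` has kernel of dimension exactly `k - 1`.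
-/

open Finset Module LinearMap

section LinearAlgebra

variable {K V W : Type*} [Field K] [AddCommGroup V] [Module K V] [AddCommGroup W] [Module K W]

theorem LinearMap.finrank_ker_comp_le [FiniteDimensional K V] [FiniteDimensional K W]
    (f : W →ₗ[K] V) (g : V →ₗ[K] W) :
    finrank K (ker (f ∘ₗ g)) ≤ finrank K (ker f) + finrank K (ker g) := by
  have h := LinearMap.lift_rank_comap_le (f := g) (ker f)
  rw [← ker_comp, ← finrank_eq_rank, ← finrank_eq_rank, ← finrank_eq_rank] at h
  simp only [Cardinal.lift_natCast] at h
  exact_mod_cast h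

theorem LinearMap.finrank_ker_comp_equiv (f : W →ₗ[K] V) (e : V ≃ₗ[K] W) :
    finrank K (ker (f ∘ₗ (e : V →ₗ[K] W))) = finrank K (ker f) := by
  rw [ker_comp, Submodule.comap_equiv_eq_map_symm, LinearEquiv.finrank_map_eq]

theorem LinearIndependent.card_le_finrank_of_forall_mem [FiniteDimensional K V] {ι : Type*}
    [Fintype ι] {v : ι → V} (hv : LinearIndependent K v) {U : Submodule K V} (hU : ∀ i, v i ∈ U) :
    Fintype.card ι ≤ finrank K U :=
  (finrank_span_eq_card hv).symm.le.trans
    (Submodule.finrank_mono (Submodule.span_le.mpr (Set.range_subset_iff.mpr hU)))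

variable {L : Type*} [Field L] [Algebra K L] {n : ℕ}

theorem rkw_zero : rkw K (0 : Fin n → L) = 0 := by
  have hspan : Submodule.span K (Set.range (0 : Fin n → L)) = ⊥ :=
    Submodule.span_eq_bot.mpr (Set.forall_mem_range.mpr fun _ => rfl)
  rw [rkw, hspan, finrank_bot]

theorem rkw_comp_eq_finrank_range {g : Fin n → V} (hg : Submodule.span K (Set.range g) = ⊤)
    (f : V →ₗ[K] L) :
    rkw K (f ∘ g) = finrank K (range f) := by
  rw [rkw, Set.range_comp, ← Submodule.map_span, hg, Submodule.map_top]

end LinearAlgebra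

section SkewOperator

variable {K L : Type*} [Field K] [Field L] [Algebra K L] (θ : L ≃ₐ[K] L)

noncomputable def skewOp (a : ℕ → L) (D : ℕ) : L →ₗ[K] L :=
  ∑ i ∈ range D, a i • (θ ^ i).toLinearMap

theorem skewOp_apply (a : ℕ → L) (D : ℕ) (x : L) :
    skewOp θ a D x = ∑ i ∈ range D, a i * (θ ^ i) x := by
  simp [skewOp]

theorem skewEval_eq_skewOp {P : L[X]} {D : ℕ} (hP : P.natDegree < D) (x : L) :
    skewEval θ P x = skewOp θ P.coeff D x := by
  rw [skewOp_apply, skewEval]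
  exact P.sum_over_range' (fun i => zero_mul ((θ ^ i) x)) D hP

theorem skewOp_comp_mulLeft (a : ℕ → L) (D : ℕ) (v : L) :
    skewOp θ a D ∘ₗ LinearMap.mulLeft K v = skewOp θ (fun i => a i * (θ ^ i) v) D := by
  ext x
  simp only [comp_apply, mulLeft_apply, skewOp_apply, map_mul, mul_assoc]

theorem skewOp_eq_comp_sub_id (b : ℕ → L) (D : ℕ) (hb : ∑ i ∈ range (D + 1), b i = 0) :
    skewOp θ b (D + 1) =
      skewOp θ (fun j => -∑ i ∈ range (j + 1), b i) D ∘ₗ (θ.toLinearMap - LinearMap.id) := by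
  ext x
  have hparts := sum_range_by_parts (fun i => (θ ^ i) x) b (D + 1)
  simp only [smul_eq_mul, add_tsub_cancel_right, hb, mul_zero, zero_sub] at hparts
  have hstep (j : ℕ) : (θ ^ j) (θ x - x) = (θ ^ (j + 1)) x - (θ ^ j) x := by
    rw [map_sub, pow_succ, AlgEquiv.mul_apply]
  simp only [comp_apply, skewOp_apply, LinearMap.sub_apply, AlgEquiv.toLinearMap_apply, id_apply,
    hstep, neg_mul, sum_neg_distrib]
  rw [sum_congr rfl fun i _ => mul_comm (b i) _, hparts]
  simp only [mul_comm]

theorem rkw_skewEval_add_finrank_ker [FiniteDimensional K L] {n : ℕ} {g : Fin n → L}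
    (hg : Submodule.span K (Set.range g) = ⊤) {P : L[X]} {D : ℕ} (hP : P.natDegree < D) :
    rkw K (fun i => skewEval θ P (g i)) + finrank K (ker (skewOp θ P.coeff D)) = finrank K L := by
  have hc : (fun i => skewEval θ P (g i)) = skewOp θ P.coeff D ∘ g :=
    funext fun i => skewEval_eq_skewOp θ hP (g i)
  rw [hc, rkw_comp_eq_finrank_range hg, finrank_range_add_finrank_ker]

theorem exists_skewEval_eq_zero {m D : ℕ} (hmD : m < D) (w : Fin m → L) :
    ∃ P : L[X], P ≠ 0 ∧ P.natDegree < D ∧ ∀ i, skewEval θ P (w i) = 0 := by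
  let evalAt (x : L) : L[X] →ₗ[L] L := lsum fun i => LinearMap.mulRight L ((θ ^ i) x)
  let Φ : degreeLT L D →ₗ[L] (Fin m → L) :=
    LinearMap.pi fun i => evalAt (w i) ∘ₗ (degreeLT L D).subtype
  have hdim : finrank L (Fin m → L) < finrank L (degreeLT L D) := by
    rw [(degreeLTEquiv L D).finrank_eq]
    simpa using hmD
  obtain ⟨⟨P, hPD⟩, hPΦ, hP0⟩ := (Submodule.ne_bot_iff _).mp (ker_ne_bot_of_finrank_lt hdim)
  have hP : P ≠ 0 := fun h => hP0 (Subtype.ext h)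
  have hPΦ : Φ ⟨P, hPD⟩ = 0 := hPΦ
  exact ⟨P, hP, (natDegree_lt_iff_degree_lt hP).mpr (mem_degreeLT.mp hPD), congrFun hPΦ⟩

end SkewOperator

section Galois

variable {K L : Type*} [Field K] [Field L] [Algebra K L] [IsGalois K L] [FiniteDimensional K L]
  (θ : L ≃ₐ[K] L)

theorem finrank_ker_sub_id_le_one (hgen : ∀ σ : L ≃ₐ[K] L, σ ∈ Subgroup.zpowers θ) :
    finrank K (ker (θ.toLinearMap - LinearMap.id)) ≤ 1 := by
  have hker : ker (θ.toLinearMap - LinearMap.id) ≤ Subalgebra.toSubmodule (⊥ : Subalgebra K L) := by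
    intro x hx
    have hθx : θ ∈ MulAction.stabilizer (L ≃ₐ[K] L) x := sub_eq_zero.mp hx
    rw [Subalgebra.mem_toSubmodule, Algebra.mem_bot, InfiniteGalois.mem_range_algebraMap_iff_fixed]
    exact fun σ => Subgroup.zpowers_le.mpr hθx (hgen σ)
  calc finrank K (ker (θ.toLinearMap - LinearMap.id))
      ≤ finrank K (Subalgebra.toSubmodule (⊥ : Subalgebra K L)) := Submodule.finrank_mono hker
    _ = 1 := Subalgebra.finrank_bot

theorem finrank_ker_skewOp_le (hgen : ∀ σ : L ≃ₐ[K] L, σ ∈ Subgroup.zpowers θ)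
    (a : ℕ → L) (d : ℕ) (ha : a d ≠ 0) :
    finrank K (ker (skewOp θ a (d + 1))) ≤ d := by
  induction d generalizing a with
  | zero =>
    suffices ker (skewOp θ a 1) = ⊥ by rw [this, finrank_bot]
    refine ker_eq_bot'.mpr fun x hx => ?_
    simpa [skewOp_apply, ha] using hx
  | succ d ih =>
    show finrank K (ker (skewOp θ a (d + 2))) ≤ d + 1
    by_cases hbot : ker (skewOp θ a (d + 2)) = ⊥
    · rw [hbot, finrank_bot]
      exact Nat.zero_le _
    obtain ⟨v, hv, hv0⟩ := (Submodule.ne_bot_iff _).mp hbot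
    set b : ℕ → L := fun i => a i * (θ ^ i) v
    have hb : ∑ i ∈ range (d + 2), b i = 0 := by simpa only [mem_ker, skewOp_apply] using hv
    have hc : -∑ i ∈ range (d + 1), b i ≠ 0 := by
      rw [sum_range_succ, add_eq_zero_iff_eq_neg] at hb
      rw [hb, neg_neg]
      exact mul_ne_zero ha ((_root_.map_ne_zero _).mpr hv0)
    let e := (Units.mk0 v hv0).mulLeftLinearEquiv K L
    calc finrank K (ker (skewOp θ a (d + 2)))
        = finrank K (ker (skewOp θ a (d + 2) ∘ₗ (e : L →ₗ[K] L))) :=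
          (finrank_ker_comp_equiv _ _).symm
      _ = finrank K (ker (skewOp θ (fun j => -∑ i ∈ range (j + 1), b i) (d + 1) ∘ₗ
            (θ.toLinearMap - LinearMap.id))) := by
          rw [← skewOp_eq_comp_sub_id θ b (d + 1) hb, ← skewOp_comp_mulLeft]
          rfl
      _ ≤ d + 1 := (finrank_ker_comp_le _ _).trans
          (add_le_add (ih _ hc) (finrank_ker_sub_id_le_one θ hgen))

theorem finrank_ker_skewOp_coeff_le (hgen : ∀ σ : L ≃ₐ[K] L, σ ∈ Subgroup.zpowers θ)
    {P : L[X]} (hP : P ≠ 0) {D : ℕ} (hD : P.natDegree < D) :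
    finrank K (ker (skewOp θ P.coeff D)) ≤ P.natDegree := by
  have : skewOp θ P.coeff D = skewOp θ P.coeff (P.natDegree + 1) := LinearMap.ext fun x => by
    rw [← skewEval_eq_skewOp θ hD, ← skewEval_eq_skewOp θ P.natDegree.lt_succ_self]
  rw [this]
  exact finrank_ker_skewOp_le θ hgen P.coeff _ (leadingCoeff_ne_zero.mpr hP)

end Galois

theorem gabidulin_code_is_MRD_general
    {K L : Type*} [Field K] [Field L] [Algebra K L] [IsGalois K L]
    (n : ℕ) (hn : Module.finrank K L = n)
    (θ : L ≃ₐ[K] L)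
    (hgen : ∀ σ : L ≃ₐ[K] L, σ ∈ Subgroup.zpowers θ)
    (g : Fin n → L) (hg : LinearIndependent K g)
    (k : ℕ) (hk1 : 1 ≤ k) (hkn : k ≤ n) :
    (∀ c : Fin n → L,
      (∃ P : Polynomial L, P.natDegree < k ∧ ∀ i, c i = skewEval θ P (g i)) →
      c ≠ 0 → n - k + 1 ≤ rkw K c) ∧
    (∃ c : Fin n → L,
      (∃ P : Polynomial L, P.natDegree < k ∧ ∀ i, c i = skewEval θ P (g i)) ∧
      c ≠ 0 ∧ rkw K c = n - k + 1) := by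
  have : FiniteDimensional K L := Module.finite_of_finrank_pos (by omega)
  have hspan : Submodule.span K (Set.range g) = ⊤ :=
    hg.span_eq_top_of_card_eq_finrank' (by simp [hn])
  refine ⟨?_, ?_⟩
  · rintro c ⟨P, hPk, hc⟩ hc0
    obtain rfl : c = fun i => skewEval θ P (g i) := funext hc
    have hP : P ≠ 0 := by
      rintro rfl
      exact hc0 (funext fun i => by simp [skewEval])
    have hrank := rkw_skewEval_add_finrank_ker θ hspan hPk
    have hker := finrank_ker_skewOp_coeff_le θ hgen hP hPk
    omega
  · have hk : k - 1 ≤ n := by omega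
    obtain ⟨P, hP, hPk, hvan⟩ :=
      exists_skewEval_eq_zero θ (by omega : k - 1 < k) (g ∘ Fin.castLE hk)
    have hker_ge : k - 1 ≤ finrank K (ker (skewOp θ P.coeff k)) := by
      simpa using (hg.comp _ (Fin.castLE_injective hk)).card_le_finrank_of_forall_mem
        fun i => (skewEval_eq_skewOp θ hPk _).symm.trans (hvan i)
    have hrank := rkw_skewEval_add_finrank_ker θ hspan hPk
    have hker_le := finrank_ker_skewOp_coeff_le θ hgen hP hPk
    refine ⟨_, ⟨P, hPk, fun i => rfl⟩, fun h0 => ?_, by omega⟩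
    rw [h0, rkw_zero] at hrank
    omega

/-- The generalized Gabidulin code `Gab_{θ,k}(g)` is Maximum Rank Distance:
every nonzero codeword has rank weight at least `n - k + 1`, and its minimum
rank distance equals `n - k + 1`. -/
theorem gabidulin_code_is_MRD
    {K L : Type*} [Field K] [Field L] [Algebra K L] [IsGalois K L]
    (n : ℕ) (hn : Module.finrank K L = n)
    (θ : L ≃ₐ[K] L) (hord : orderOf θ = n)
    (hgen : ∀ σ : L ≃ₐ[K] L, σ ∈ Subgroup.zpowers θ)
    (g : Fin n → L) (hg : LinearIndependent K g)
    (k : ℕ) (hk1 : 1 ≤ k) (hkn : k ≤ n) :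
    (∀ c : Fin n → L,
      (∃ P : Polynomial L, P.natDegree < k ∧ ∀ i, c i = skewEval θ P (g i)) →
      c ≠ 0 → n - k + 1 ≤ rkw K c) ∧
    (∃ c : Fin n → L,
      (∃ P : Polynomial L, P.natDegree < k ∧ ∀ i, c i = skewEval θ P (g i)) ∧
      c ≠ 0 ∧ rkw K c = n - k + 1) :=
  gabidulin_code_is_MRD_general n hn θ hgen g hg k hk1 hkn
end

section
/- In the Artin–Schreier extension L = F₅(x)[y] with y⁵ − y = x and θ(y) = y + 1, the 3×5 matrix G with rows (θ^{i}(y^j))_{j=0..4} for i = 0,1,2, i.e. rows (1, y, y², y³, y⁴), (1, y+1, (y+1)², (y+1)³, (y+1)⁴), (1, y+2, (y+2)², (y+2)³, (y+2)⁴), generates an L-linear code of dimension 3 in L⁵ whose minimum rank distance (with respect to K = F₅(x)) is exactly 3. -/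
/-!
A `θ`-polynomial `P = ∑_{i ≤ n} aᵢ θⁱ` with some `aᵢ ≠ 0`, where `θ` generates a group with
fixed field `K`, has a kernel of `K`-dimension at most `n`. Indeed, for a root `u ≠ 0` of `P`,
summation by parts gives `P (u w) = Q (θ w - w)` for a `θ`-polynomial `Q` of degree `n - 1`, and
`v ↦ θ (v / u) - v / u` maps `ker P` into `ker Q` with kernel `K u`.

The codewords of the Gabidulin code with rows `(θⁱ bⱼ)ⱼ`, `i < k`, for a `K`-basis `b` of `L`,
are the vectors `(P bⱼ)ⱼ` with `P` of degree `< k`, so their rank weight `[L : K] - dim ker P` is at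
least `[L : K] - k + 1`. A `P ≠ 0` vanishing on `k - 1` basis vectors, which exists by counting
dimensions over `L`, attains the bound.

In the Artin–Schreier extension `θ` has order `p`, while `[L : K] ≤ p` because `y` is a root of
`X ^ p - X - x`. By Artin's theorem `[L : θ-fixed field] = p`, so `[L : K] = p`, the fixed field
of `θ` is `K`, and `1, y, …, y ^ (p - 1)` is a `K`-basis of `L`.
-/

instance : Fact (Nat.Prime 5) := ⟨by norm_num⟩

open Finset Module

theorem rkw_add_finrank_ker {K L : Type*} [Field K] [Field L] [Algebra K L] {m : ℕ}
    (b : Basis (Fin m) K L) (f : L →ₗ[K] L) :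
    rkw K (fun j => f (b j)) + finrank K (LinearMap.ker f) = m := by
  have : FiniteDimensional K L := Module.Finite.of_basis b
  have hspan : Submodule.span K (Set.range fun j => f (b j)) = LinearMap.range f := by
    rw [Set.range_comp' f b, ← Submodule.map_span, b.span_eq, Submodule.map_top]
  rw [rkw, hspan, LinearMap.finrank_range_add_finrank_ker, finrank_eq_card_basis b,
    Fintype.card_fin]

namespace AlgEquiv

variable {K L : Type*} [Field K] [Field L] [Algebra K L] (θ : L ≃ₐ[K] L)

noncomputable def thetaPoly (a : ℕ → L) (n : ℕ) : L →ₗ[K] L :=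
  ∑ i ∈ range n, a i • (θ ^ i).toLinearMap

theorem thetaPoly_apply (a : ℕ → L) (n : ℕ) (z : L) :
    θ.thetaPoly a n z = ∑ i ∈ range n, a i * (θ ^ i) z := by
  simp [thetaPoly]

theorem thetaPoly_mul (a : ℕ → L) (n : ℕ) (u w : L) :
    θ.thetaPoly a (n + 1) (u * w) = (θ ^ n) w * θ.thetaPoly a (n + 1) u +
      θ.thetaPoly (fun j => -∑ i ∈ range (j + 1), a i * (θ ^ i) u) n (θ w - w) := by
  have hterm (i : ℕ) : a i * (θ ^ i) (u * w) = (θ ^ i) w * (a i * (θ ^ i) u) := by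
    rw [map_mul]; ring
  have hdiff (j : ℕ) : (θ ^ j) (θ w - w) = (θ ^ (j + 1)) w - (θ ^ j) w := by
    rw [map_sub, pow_succ, mul_apply]
  have hparts := sum_range_by_parts (fun i => (θ ^ i) w) (fun i => a i * (θ ^ i) u) (n + 1)
  simp only [smul_eq_mul, add_tsub_cancel_right] at hparts
  simp only [thetaPoly_apply, hterm, hdiff]
  rw [hparts, sub_eq_add_neg, ← sum_neg_distrib]
  congr 1
  exact sum_congr rfl fun j _ => by ring

theorem mem_range_algebraMap_of_apply_eq
    (hθ : IntermediateField.fixedField (Subgroup.zpowers θ) = ⊥)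
    {z : L} (hz : θ z = z) : z ∈ Set.range (algebraMap K L) := by
  have hle : Subgroup.zpowers θ ≤ MulAction.stabilizer (L ≃ₐ[K] L) z :=
    Subgroup.zpowers_le.mpr hz
  rw [← IntermediateField.mem_bot, ← hθ, IntermediateField.mem_fixedField_iff]
  exact fun f hf => hle hf

theorem finrank_ker_thetaPoly_succ_le [FiniteDimensional K L]
    (hθ : IntermediateField.fixedField (Subgroup.zpowers θ) = ⊥)
    (a : ℕ → L) (n : ℕ) {u : L} (hu : u ≠ 0) (hPu : θ.thetaPoly a (n + 1) u = 0) :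
    finrank K (LinearMap.ker (θ.thetaPoly a (n + 1))) ≤
      finrank K (LinearMap.ker
        (θ.thetaPoly (fun j => -∑ i ∈ range (j + 1), a i * (θ ^ i) u) n)) + 1 := by
  set V := LinearMap.ker (θ.thetaPoly a (n + 1))
  set φ : L →ₗ[K] L := (θ.toLinearMap - LinearMap.id) ∘ₗ LinearMap.mulLeft K u⁻¹
  have hφ : ∀ v, φ v = θ (u⁻¹ * v) - u⁻¹ * v := fun v => rfl
  have hmap : V.map φ ≤ LinearMap.ker
      (θ.thetaPoly (fun j => -∑ i ∈ range (j + 1), a i * (θ ^ i) u) n) := by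
    rintro _ ⟨v, hv, rfl⟩
    have h := θ.thetaPoly_mul a n u (u⁻¹ * v)
    rw [mul_inv_cancel_left₀ hu, LinearMap.mem_ker.mp hv, hPu, mul_zero, zero_add] at h
    rw [LinearMap.mem_ker, hφ, ← h]
  have hker : LinearMap.ker φ ≤ K ∙ u := by
    intro v hv
    rw [LinearMap.mem_ker, hφ, sub_eq_zero] at hv
    obtain ⟨k, hk⟩ := θ.mem_range_algebraMap_of_apply_eq hθ hv
    refine Submodule.mem_span_singleton.mpr ⟨k, ?_⟩
    rw [Algebra.smul_def, hk, mul_comm, mul_inv_cancel_left₀ hu]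
  have hrank := LinearMap.finrank_range_add_finrank_ker (φ.domRestrict V)
  rw [LinearMap.range_domRestrict, LinearMap.ker_domRestrict,
    ← Submodule.finrank_map_subtype_eq, Submodule.map_comap_subtype] at hrank
  have h1 := Submodule.finrank_mono hmap
  have h2 : finrank K ↥(V ⊓ LinearMap.ker φ) ≤ 1 :=
    (Submodule.finrank_mono (inf_le_right.trans hker)).trans (finrank_span_singleton hu).le
  omega

theorem finrank_ker_thetaPoly_le [FiniteDimensional K L]
    (hθ : IntermediateField.fixedField (Subgroup.zpowers θ) = ⊥)
    (n : ℕ) (a : ℕ → L) (ha : ∃ i ≤ n, a i ≠ 0) :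
    finrank K (LinearMap.ker (θ.thetaPoly a (n + 1))) ≤ n := by
  induction n generalizing a with
  | zero =>
    obtain ⟨i, hi, hai⟩ := ha
    obtain rfl : i = 0 := Nat.le_zero.mp hi
    suffices LinearMap.ker (θ.thetaPoly a 1) = ⊥ by simp [this]
    refine LinearMap.ker_eq_bot'.mpr fun z hz => ?_
    simpa [thetaPoly_apply, hai] using hz
  | succ n ih =>
    by_cases hlast : a (n + 1) = 0
    · have hP : θ.thetaPoly a (n + 1 + 1) = θ.thetaPoly a (n + 1) := by
        rw [thetaPoly, sum_range_succ, hlast, zero_smul, add_zero, thetaPoly]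
      obtain ⟨i, hi, hai⟩ := ha
      have hin : i ≤ n := Nat.le_of_lt_succ (lt_of_le_of_ne hi (by rintro rfl; exact hai hlast))
      rw [hP]
      exact (ih a ⟨i, hin, hai⟩).trans n.le_succ
    · by_cases hV : LinearMap.ker (θ.thetaPoly a (n + 1 + 1)) = ⊥
      · rw [hV, finrank_bot]
        exact Nat.zero_le _
      obtain ⟨u, hu, hu0⟩ := Submodule.exists_mem_ne_zero_of_ne_bot hV
      have hPu := LinearMap.mem_ker.mp hu
      refine (θ.finrank_ker_thetaPoly_succ_le hθ a (n + 1) hu0 hPu).trans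
        (Nat.add_le_add_right (ih _ ⟨n, le_rfl, ?_⟩) 1)
      rw [thetaPoly_apply, sum_range_succ] at hPu
      rw [neg_ne_zero, eq_neg_of_add_eq_zero_left hPu, neg_ne_zero]
      exact mul_ne_zero hlast ((map_ne_zero _).mpr hu0)

theorem finrank_fixedField_mul_orderOf [FiniteDimensional K L] :
    finrank K (IntermediateField.fixedField (Subgroup.zpowers θ)) * orderOf θ = finrank K L := by
  rw [← Nat.card_zpowers, ← IntermediateField.finrank_fixedField_eq_card, finrank_mul_finrank]

theorem orderOf_le_finrank [FiniteDimensional K L] : orderOf θ ≤ finrank K L := by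
  rw [← θ.finrank_fixedField_mul_orderOf]
  exact Nat.le_mul_of_pos_left _ finrank_pos

theorem fixedField_zpowers_eq_bot_of_finrank_le [FiniteDimensional K L]
    (h : finrank K L ≤ orderOf θ) : IntermediateField.fixedField (Subgroup.zpowers θ) = ⊥ := by
  rw [← IntermediateField.finrank_eq_one_iff]
  have := θ.finrank_fixedField_mul_orderOf
  have hL : 0 < finrank K L := finrank_pos
  have hF : 0 < finrank K (IntermediateField.fixedField (Subgroup.zpowers θ)) := finrank_pos
  nlinarith

variable {m : ℕ}

def gabidulinRows (b : Fin m → L) (k : ℕ) (i : Fin k) (j : Fin m) : L :=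
  (θ ^ (i : ℕ)) (b j)

def gabidulinCode (b : Fin m → L) (k : ℕ) : Submodule L (Fin m → L) :=
  Submodule.span L (Set.range (θ.gabidulinRows b k))

theorem sum_smul_gabidulinRows (b : Fin m → L) {k : ℕ} (c : Fin k → L) :
    ∑ i, c i • θ.gabidulinRows b k i =
      fun j => θ.thetaPoly (Function.extend Fin.val c 0) k (b j) := by
  funext j
  simp only [Finset.sum_apply, Pi.smul_apply, smul_eq_mul, thetaPoly_apply, gabidulinRows]
  rw [← Fin.sum_univ_eq_sum_range (fun i => Function.extend Fin.val c 0 i * (θ ^ i) (b j))]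
  simp only [Fin.val_injective.extend_apply]

variable [FiniteDimensional K L]

theorem le_rkw_sum_smul_gabidulinRows
    (hθ : IntermediateField.fixedField (Subgroup.zpowers θ) = ⊥) (b : Basis (Fin m) K L)
    {k : ℕ} {c : Fin k → L} (hc : c ≠ 0) :
    m + 1 ≤ rkw K (∑ i, c i • θ.gabidulinRows b k i) + k := by
  obtain ⟨i, hi⟩ := Function.ne_iff.mp hc
  obtain ⟨n, rfl⟩ : ∃ n, k = n + 1 := ⟨k - 1, by have := i.isLt; omega⟩
  have hker := θ.finrank_ker_thetaPoly_le hθ n (Function.extend Fin.val c 0)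
    ⟨i, Nat.le_of_lt_succ i.isLt, by rwa [Fin.val_injective.extend_apply]⟩
  have := rkw_add_finrank_ker b (θ.thetaPoly (Function.extend Fin.val c 0) (n + 1))
  rw [sum_smul_gabidulinRows]
  omega

theorem linearIndependent_gabidulinRows
    (hθ : IntermediateField.fixedField (Subgroup.zpowers θ) = ⊥) (b : Basis (Fin m) K L)
    {k : ℕ} (hk : k ≤ m) : LinearIndependent L (θ.gabidulinRows b k) := by
  refine Fintype.linearIndependent_iff.mpr fun c hc => ?_
  by_contra hc0
  have := θ.le_rkw_sum_smul_gabidulinRows hθ b (funext_iff.not.mpr hc0)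
  rw [hc, rkw, Submodule.span_eq_bot.mpr (by rintro _ ⟨j, rfl⟩; rfl), finrank_bot] at this
  omega

theorem finrank_gabidulinCode
    (hθ : IntermediateField.fixedField (Subgroup.zpowers θ) = ⊥) (b : Basis (Fin m) K L)
    {k : ℕ} (hk : k ≤ m) : finrank L (gabidulinCode θ b k) = k := by
  rw [gabidulinCode, finrank_span_eq_card (θ.linearIndependent_gabidulinRows hθ b hk),
    Fintype.card_fin]

theorem le_rkw_of_mem_gabidulinCode
    (hθ : IntermediateField.fixedField (Subgroup.zpowers θ) = ⊥) (b : Basis (Fin m) K L)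
    {k : ℕ} {c : Fin m → L} (hc : c ∈ gabidulinCode θ b k) (hc0 : c ≠ 0) :
    m + 1 ≤ rkw K c + k := by
  obtain ⟨a, rfl⟩ := (Submodule.mem_span_range_iff_exists_fun L).mp hc
  refine θ.le_rkw_sum_smul_gabidulinRows hθ b fun ha => hc0 ?_
  simp [ha]

theorem exists_mem_gabidulinCode_rkw_eq
    (hθ : IntermediateField.fixedField (Subgroup.zpowers θ) = ⊥) (b : Basis (Fin m) K L)
    {n : ℕ} (hn : n + 1 ≤ m) :
    ∃ c ∈ gabidulinCode θ b (n + 1), c ≠ 0 ∧ rkw K c + n = m := by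
  let e : Fin n → Fin m := Fin.castLE (by omega)
  have hdep : ¬ LinearIndependent L fun i => θ.gabidulinRows b (n + 1) i ∘ e := by
    intro hli
    have := hli.fintype_card_le_finrank
    rw [Fintype.card_fin, Module.finrank_fin_fun] at this
    omega
  obtain ⟨a, ha, i, hai⟩ := Fintype.not_linearIndependent_iff.mp hdep
  refine ⟨∑ i, a i • θ.gabidulinRows b (n + 1) i,
    (Submodule.mem_span_range_iff_exists_fun L).mpr ⟨a, rfl⟩,
    fun h => hai (Fintype.linearIndependent_iff.mp
      (θ.linearIndependent_gabidulinRows hθ b hn) a h i), ?_⟩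
  have hlow := θ.le_rkw_sum_smul_gabidulinRows hθ b (Function.ne_iff.mpr ⟨i, hai⟩)
  rw [sum_smul_gabidulinRows] at hlow ⊢
  set P := θ.thetaPoly (Function.extend Fin.val a 0) (n + 1)
  have hvanish : Submodule.span K (Set.range (b ∘ e)) ≤ LinearMap.ker P := by
    rw [Submodule.span_le]
    rintro _ ⟨j, rfl⟩
    have hj : (∑ i, a i • θ.gabidulinRows b (n + 1) i) (e j) = 0 := by
      simpa [Finset.sum_apply] using congrFun ha j
    rwa [sum_smul_gabidulinRows] at hj
  have hker := Submodule.finrank_mono hvanish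
  rw [finrank_span_eq_card (b.linearIndependent.comp e (Fin.castLE_injective _)),
    Fintype.card_fin] at hker
  have := rkw_add_finrank_ker b P
  omega

end AlgEquiv

section ArtinSchreier

open Polynomial

variable {K L : Type*} [Field K] [Field L] [Algebra K L] {p : ℕ} {y : L} {a : K}

theorem exists_monic_degree_eq_aeval_eq_zero_of_pow_sub_self_eq (hp : 1 < p)
    (hy : y ^ p - y = algebraMap K L a) :
    ∃ q : K[X], q.Monic ∧ q.degree = p ∧ aeval y q = 0 := by
  have hdeg : (X + C a).degree < (X ^ p : K[X]).degree := by
    rw [degree_X_add_C, degree_X_pow]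
    exact_mod_cast hp
  refine ⟨X ^ p - (X + C a), (monic_X_pow p).sub_of_left hdeg, ?_, by simp [← hy]⟩
  rw [degree_sub_eq_left_of_degree_lt hdeg, degree_X_pow]

variable [Fact p.Prime] [CharP L p] {θ : L ≃ₐ[K] L}

theorem AlgEquiv.orderOf_eq_of_apply_eq_add_one (hgen : Algebra.adjoin K {y} = ⊤)
    (hθ : θ y = y + 1) : orderOf θ = p := by
  have hpow : ∀ n : ℕ, (θ ^ n) y = y + n := by
    intro n
    induction n with
    | zero => simp
    | succ n ih => rw [pow_succ', mul_apply, ih, map_add, hθ, map_natCast]; push_cast; ring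
  refine orderOf_eq_prime ?_ fun h => ?_
  · refine AlgEquiv.coe_toAlgHom_injective (AlgHom.ext_of_adjoin_eq_top hgen ?_)
    rintro _ rfl
    simp [hpow]
  · simp [h] at hθ

theorem exists_basis_pow_of_artinSchreier (hy : y ^ p - y = algebraMap K L a)
    (hgen : Algebra.adjoin K {y} = ⊤) (hθ : θ y = y + 1) :
    ∃ b : Basis (Fin p) K L, ⇑b = fun j : Fin p => y ^ (j : ℕ) := by
  obtain ⟨q, hq, hqdeg, hqy⟩ :=
    exists_monic_degree_eq_aeval_eq_zero_of_pow_sub_self_eq (Fact.out : p.Prime).one_lt hy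
  have hint : IsIntegral K y := ⟨q, hq, by rwa [aeval_def] at hqy⟩
  let pb := PowerBasis.ofAdjoinEqTop' hint hgen
  have := pb.finite
  have hle : pb.dim ≤ p := natDegree_le_of_degree_le (hqdeg ▸ minpoly.min K y hq hqy)
  have hge : p ≤ pb.dim := by
    rw [← pb.finrank, ← θ.orderOf_eq_of_apply_eq_add_one hgen hθ]
    exact θ.orderOf_le_finrank
  refine ⟨pb.basis.reindex (finCongr (le_antisymm hle hge)), ?_⟩
  ext j
  rw [Basis.reindex_apply, PowerBasis.coe_basis, PowerBasis.ofAdjoinEqTop'_gen]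
  rfl

end ArtinSchreier

theorem artin_schreier_gabidulin_example_general
    (L : Type*) [Field L] [Algebra (RatFunc (ZMod 5)) L]
    (y : L) (hy : y ^ 5 - y = algebraMap (RatFunc (ZMod 5)) L RatFunc.X)
    (hLgen : Algebra.adjoin (RatFunc (ZMod 5)) {y} = ⊤)
    (θ : L ≃ₐ[RatFunc (ZMod 5)] L) (hθ : θ y = y + 1)
    (C : Submodule L (Fin 5 → L))
    (hC : C = Submodule.span L
      (Set.range fun i : Fin 3 => fun j : Fin 5 => (θ ^ (i : ℕ)) (y ^ (j : ℕ)))) :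
    Module.finrank L C = 3 ∧
    (∀ c ∈ C, c ≠ 0 → 3 ≤ rkw (RatFunc (ZMod 5)) c) ∧
    (∃ c ∈ C, c ≠ 0 ∧ rkw (RatFunc (ZMod 5)) c = 3) := by
  have : CharP L 5 := charP_of_injective_algebraMap (algebraMap (RatFunc (ZMod 5)) L).injective 5
  obtain ⟨b, hb⟩ := exists_basis_pow_of_artinSchreier hy hLgen hθ
  have : FiniteDimensional (RatFunc (ZMod 5)) L := Module.Finite.of_basis b
  have hfix := θ.fixedField_zpowers_eq_bot_of_finrank_le (by
    rw [finrank_eq_card_basis b, Fintype.card_fin, θ.orderOf_eq_of_apply_eq_add_one hLgen hθ])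
  obtain rfl : C = θ.gabidulinCode b 3 := by rw [hC, hb]; rfl
  refine ⟨θ.finrank_gabidulinCode hfix b (by norm_num), fun c hc hc0 => ?_, ?_⟩
  · have := θ.le_rkw_of_mem_gabidulinCode hfix b hc hc0
    omega
  · obtain ⟨c, hc, hc0, hrkw⟩ := θ.exists_mem_gabidulinCode_rkw_eq hfix b (n := 2) (by norm_num)
    exact ⟨c, hc, hc0, by omega⟩

/-- In the Artin–Schreier extension `L = F₅(x)[y]`, `y⁵ - y = x`, with
`θ(y) = y + 1`, the 3×5 matrix with rows `(θⁱ(yʲ))_{j=0..4}`, `i = 0,1,2`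
(i.e. `(1,y,y²,y³,y⁴)`, `(1,y+1,(y+1)²,(y+1)³,(y+1)⁴)`,
`(1,y+2,(y+2)²,(y+2)³,(y+2)⁴)`) generates an `L`-linear code of dimension 3 in
`L⁵` whose minimum rank distance over `K = F₅(x)` is exactly 3. -/
theorem artin_schreier_gabidulin_example
    (L : Type*) [Field L] [Algebra (RatFunc (ZMod 5)) L]
    (y : L) (hy : y ^ 5 - y = algebraMap (RatFunc (ZMod 5)) L RatFunc.X)
    (hLgen : Algebra.adjoin (RatFunc (ZMod 5)) {y} = ⊤)
    (θ : L ≃ₐ[RatFunc (ZMod 5)] L) (hθ : θ y = y + 1)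
    (hgen : ∀ σ : L ≃ₐ[RatFunc (ZMod 5)] L, σ ∈ Subgroup.zpowers θ)
    (C : Submodule L (Fin 5 → L))
    (hC : C = Submodule.span L
      (Set.range fun i : Fin 3 => fun j : Fin 5 => (θ ^ (i : ℕ)) (y ^ (j : ℕ)))) :
    Module.finrank L C = 3 ∧
    (∀ c ∈ C, c ≠ 0 → 3 ≤ rkw (RatFunc (ZMod 5)) c) ∧
    (∃ c ∈ C, c ≠ 0 ∧ rkw (RatFunc (ZMod 5)) c = 3) :=
  artin_schreier_gabidulin_example_general L y hy hLgen θ hθ C hC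
end
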